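/- Let 𝓕 be a family of holomorphic functions on a domain D ⊆ ℂ. If the generalized escaping like set U(𝓕) has empty interior, then the Julia like set J(𝓕) is either empty or a perfect set (i.e. J(𝓕) is closed in D and has no isolated points). -/

import Mathlib

open Filter Topology Set

/-- Locally uniform divergence to `∞` on the set `s`: on every compact subset of `s`,
the moduli eventually exceed every bound, uniformly. -/
def TendstoLocallyUniformlyOnInfty (F : ℕ → ℂ → ℂ) (s : Set ℂ) : Prop :=
  ∀ K ⊆ s, IsCompact K → ∀ M : ℝ, ∀ᶠ n in Filter.atTop, ∀ z ∈ K, M ≤ ‖F n z‖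

/-- The family `𝓕` of functions holomorphic on `D` is normal at `z₀ ∈ D`: there is a
neighborhood `N ⊆ D` of `z₀` on which every sequence from `𝓕` has a subsequence converging
locally uniformly either to a holomorphic function or to `∞`. -/
def NormalAt (D : Set ℂ) (𝓕 : Set (ℂ → ℂ)) (z₀ : ℂ) : Prop :=
  ∃ N, N ⊆ D ∧ N ∈ 𝓝 z₀ ∧ ∀ f : ℕ → ℂ → ℂ, (∀ n, f n ∈ 𝓕) →
    ∃ φ : ℕ → ℕ, StrictMono φ ∧
      ((∃ g : ℂ → ℂ, DifferentiableOn ℂ g N ∧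
          TendstoLocallyUniformlyOn (fun n => f (φ n)) g Filter.atTop N) ∨
        TendstoLocallyUniformlyOnInfty (fun n => f (φ n)) N)

/-- The Fatou like set of `𝓕` on `D`: points of `D` where `𝓕` is normal. -/
def FatouSet (D : Set ℂ) (𝓕 : Set (ℂ → ℂ)) : Set ℂ := {z | z ∈ D ∧ NormalAt D 𝓕 z}

/-- The Julia like set of `𝓕` on `D`. -/
def JuliaSet (D : Set ℂ) (𝓕 : Set (ℂ → ℂ)) : Set ℂ := D \ FatouSet D 𝓕

/-- The backward orbit of `z` with respect to `𝓕`. -/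
def BackwardOrbit (D : Set ℂ) (𝓕 : Set (ℂ → ℂ)) (z : ℂ) : Set ℂ :=
  {w | w ∈ D ∧ ∃ f ∈ 𝓕, f w = z}

/-- The exceptional set of `𝓕`: points with finite backward orbit. -/
def ExceptionalSet (D : Set ℂ) (𝓕 : Set (ℂ → ℂ)) : Set ℂ :=
  {z | (BackwardOrbit D 𝓕 z).Finite}

/-- The escaping like set `I(𝓕)`: points `z ∈ D` such that `f n z → ∞` for every
infinite (i.e. injective) sequence `f` in `𝓕`. -/
def EscapingSet (D : Set ℂ) (𝓕 : Set (ℂ → ℂ)) : Set ℂ :=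
  {z | z ∈ D ∧ ∀ f : ℕ → ℂ → ℂ, (∀ n, f n ∈ 𝓕) → Function.Injective f →
    Filter.Tendsto (fun n => ‖f n z‖) Filter.atTop Filter.atTop}

/-- The generalized escaping like set `U(𝓕)`: points `z ∈ D` such that `f n z → ∞` for some
sequence `f` in `𝓕`. -/
def GenEscapingSet (D : Set ℂ) (𝓕 : Set (ℂ → ℂ)) : Set ℂ :=
  {z | z ∈ D ∧ ∃ f : ℕ → ℂ → ℂ, (∀ n, f n ∈ 𝓕) ∧
    Filter.Tendsto (fun n => ‖f n z‖) Filter.atTop Filter.atTop}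

/-- A transcendental entire function: entire and not a polynomial. -/
def TranscendentalEntire (f : ℂ → ℂ) : Prop :=
  Differentiable ℂ f ∧ ¬ ∃ p : Polynomial ℂ, ∀ z, f z = p.eval z

/-- Boundary of `A` relative to `D`; for `D` open and `A ⊆ D` this coincides with the
boundary of `A` in the subspace topology of `D`. -/
def relBoundary (D A : Set ℂ) : Set ℂ := D ∩ frontier A

/-- Closure of `A` in `D`; for `D` open and `A ⊆ D` this coincides with the closure of `A`
in the subspace topology of `D`. -/
def relClosure (D A : Set ℂ) : Set ℂ := D ∩ closure A

/-!
Normality at `z₀` only has to be checked on a small circle around `z₀`. The circle is compact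
and lies in the Fatou set, so by a diagonal argument over a finite cover every sequence of `𝓕`
has a subsequence that converges locally uniformly near each point of the circle; the limit
cannot be `∞`, since that would put an open set inside `U(𝓕)`. The subsequence is therefore
uniformly Cauchy on the circle, and by the maximum modulus principle also on the closed disc,
where it converges uniformly to a holomorphic limit. Hence the Julia set has no isolated points;
it is closed in `D` because normality at a point propagates to a neighbourhood.
-/

open Metric

section UniformCauchy

variable {ι ι' α β : Type*} [UniformSpace β] {F : ι → α → β} {p : Filter ι} {s t : Set α}

theorem UniformCauchySeqOn.comp_tendsto {p' : Filter ι'} (hF : UniformCauchySeqOn F p s)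
    {φ : ι' → ι} (hφ : Tendsto φ p' p) : UniformCauchySeqOn (F ∘ φ) p' s := fun u hu =>
  (hφ.prodMap hφ).eventually (hF u hu)

theorem UniformCauchySeqOn.union (hs : UniformCauchySeqOn F p s)
    (ht : UniformCauchySeqOn F p t) : UniformCauchySeqOn F p (s ∪ t) := fun u hu =>
  (hs u hu).and (ht u hu) |>.mono fun _ h x hx => hx.elim (h.1 x) (h.2 x)

theorem UniformCauchySeqOn.exists_tendstoUniformlyOn [CompleteSpace β] [Nonempty β] [p.NeBot]
    (hF : UniformCauchySeqOn F p s) : ∃ g, TendstoUniformlyOn F g p s := by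
  have hlim : ∀ x ∈ s, ∃ l, Tendsto (fun i => F i x) p (𝓝 l) := fun x hx =>
    CompleteSpace.complete (hF.cauchy_map hx)
  choose! g hg using hlim
  exact ⟨g, hF.tendstoUniformlyOn_of_tendsto hg⟩

end UniformCauchy

section SubseqUniformCauchy

variable {α β : Type*} [UniformSpace β] {𝓕 : Set (α → β)} {s t : Set α}

def SubseqUniformCauchyOn (𝓕 : Set (α → β)) (s : Set α) : Prop :=
  ∀ F : ℕ → α → β, (∀ n, F n ∈ 𝓕) →
    ∃ φ : ℕ → ℕ, StrictMono φ ∧ UniformCauchySeqOn (F ∘ φ) atTop s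

theorem SubseqUniformCauchyOn.mono (h : SubseqUniformCauchyOn 𝓕 t) (hst : s ⊆ t) :
    SubseqUniformCauchyOn 𝓕 s := fun F hF =>
  (h F hF).imp fun _ hφ => ⟨hφ.1, hφ.2.mono hst⟩

theorem SubseqUniformCauchyOn.union (hs : SubseqUniformCauchyOn 𝓕 s)
    (ht : SubseqUniformCauchyOn 𝓕 t) : SubseqUniformCauchyOn 𝓕 (s ∪ t) := by
  intro F hF
  obtain ⟨φ, hφ, hFs⟩ := hs F hF
  obtain ⟨ψ, hψ, hFt⟩ := ht (F ∘ φ) fun n => hF (φ n)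
  exact ⟨φ ∘ ψ, hφ.comp hψ, (hFs.comp_tendsto hψ.tendsto_atTop).union hFt⟩

theorem IsCompact.subseqUniformCauchyOn [TopologicalSpace α] (hs : IsCompact s)
    (h : ∀ x ∈ s, ∃ t ∈ 𝓝 x, SubseqUniformCauchyOn 𝓕 t) : SubseqUniformCauchyOn 𝓕 s := by
  refine hs.induction_on (p := SubseqUniformCauchyOn 𝓕)
    (fun F _ => ⟨id, strictMono_id, fun _ _ => .of_forall fun _ _ => False.elim⟩)
    (fun _ _ hst ht => ht.mono hst) (fun _ _ hs ht => hs.union ht) fun x hx => ?_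
  obtain ⟨t, ht, hFt⟩ := h x hx
  exact ⟨t, mem_nhdsWithin_of_mem_nhds ht, hFt⟩

end SubseqUniformCauchy

theorem uniformCauchySeqOn_closure_of_frontier {ι E G : Type*} [NormedAddCommGroup E]
    [NormedSpace ℂ E] [Nontrivial E] [NormedAddCommGroup G] [NormedSpace ℂ G]
    {F : ι → E → G} {p : Filter ι} {U : Set E}
    (hU : Bornology.IsBounded U) (hF : ∀ i, DiffContOnCl ℂ (F i) U)
    (h : UniformCauchySeqOn F p (frontier U)) : UniformCauchySeqOn F p (closure U) := by
  intro u hu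
  obtain ⟨ε, hε, hεu⟩ := mem_uniformity_dist.1 hu
  filter_upwards [h _ (dist_mem_uniformity (half_pos hε))] with ij hij x hx
  refine hεu (lt_of_le_of_lt ?_ (half_lt_self hε))
  rw [dist_eq_norm]
  refine Complex.norm_le_of_forall_mem_frontier_norm_le hU ((hF ij.1).sub (hF ij.2))
    (fun z hz => (dist_eq_norm (F ij.1 z) (F ij.2 z) ▸ hij z hz).le) hx

variable {D : Set ℂ} {𝓕 : Set (ℂ → ℂ)}

theorem NormalAt.eventually_normalAt {z : ℂ} (h : NormalAt D 𝓕 z) :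
    ∀ᶠ w in 𝓝 z, NormalAt D 𝓕 w := by
  obtain ⟨N, hND, hN, hNF⟩ := h
  filter_upwards [interior_mem_nhds.2 hN] with w hw
  exact ⟨N, hND, mem_interior_iff_mem_nhds.1 hw, hNF⟩

theorem inter_closure_juliaSet_subset : D ∩ closure (JuliaSet D 𝓕) ⊆ JuliaSet D 𝓕 := by
  rintro z ⟨hzD, hz⟩
  refine ⟨hzD, fun hzF => ?_⟩
  obtain ⟨w, hwJ, hwF⟩ :=
    (mem_closure_iff_frequently.1 hz).and_eventually hzF.2.eventually_normalAt |>.exists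
  exact hwJ.2 ⟨hwJ.1, hwF⟩

theorem subset_genEscapingSet_of_tendstoLocallyUniformlyOnInfty {F : ℕ → ℂ → ℂ} {N : Set ℂ}
    (hND : N ⊆ D) (hF : ∀ n, F n ∈ 𝓕) (h : TendstoLocallyUniformlyOnInfty F N) :
    N ⊆ GenEscapingSet D 𝓕 := fun z hz =>
  ⟨hND hz, F, hF, tendsto_atTop.2 fun M =>
    (h {z} (singleton_subset_iff.2 hz) isCompact_singleton M).mono fun _ hn => hn z rfl⟩

theorem NormalAt.exists_mem_nhds_subseqUniformCauchyOn {w : ℂ} (h : NormalAt D 𝓕 w)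
    (hint : interior (GenEscapingSet D 𝓕) = ∅) :
    ∃ K ∈ 𝓝 w, SubseqUniformCauchyOn 𝓕 K := by
  obtain ⟨N, hND, hN, hNF⟩ := h
  obtain ⟨K, hK, hKN, hKc⟩ := local_compact_nhds (interior_mem_nhds.2 hN)
  refine ⟨K, hK, fun F hF => ?_⟩
  obtain ⟨φ, hφ, ⟨g, -, hg⟩ | hinf⟩ := hNF F hF
  · refine ⟨φ, hφ, (?_ : TendstoUniformlyOn _ g _ K).uniformCauchySeqOn⟩
    exact (tendstoLocallyUniformlyOn_iff_forall_isCompact isOpen_interior).1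
      (hg.mono interior_subset) K hKN hKc
  · have hesc := subset_genEscapingSet_of_tendstoLocallyUniformlyOnInfty hND (fun n => hF _) hinf
    have hempty : interior N ⊆ ∅ := hint ▸ interior_mono hesc
    exact (hempty (hKN (mem_of_mem_nhds hK))).elim

theorem normalAt_of_eventually_nhdsNE (hD : IsOpen D) (hol : ∀ f ∈ 𝓕, DifferentiableOn ℂ f D)
    (hint : interior (GenEscapingSet D 𝓕) = ∅) {z₀ : ℂ} (hz₀ : z₀ ∈ D)
    (h : ∀ᶠ w in 𝓝[≠] z₀, NormalAt D 𝓕 w) : NormalAt D 𝓕 z₀ := by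
  obtain ⟨r, hr, hball⟩ := nhds_basis_closedBall.mem_iff.1
    (inter_mem (eventually_nhdsWithin_iff.1 h) (hD.mem_nhds hz₀))
  have hrD : closedBall z₀ r ⊆ D := fun w hw => (hball hw).2
  have hsphere : SubseqUniformCauchyOn 𝓕 (sphere z₀ r) :=
    (isCompact_sphere z₀ r).subseqUniformCauchyOn fun w hw =>
      ((hball (sphere_subset_closedBall hw)).1 (ne_of_mem_sphere hw hr.ne')
        ).exists_mem_nhds_subseqUniformCauchyOn hint
  refine ⟨ball z₀ r, ball_subset_closedBall.trans hrD, ball_mem_nhds z₀ hr, fun F hF => ?_⟩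
  obtain ⟨φ, hφ, hcauchy⟩ := hsphere F hF
  have hdiff : ∀ n, DifferentiableOn ℂ (F (φ n)) (closedBall z₀ r) := fun n =>
    (hol _ (hF _)).mono hrD
  have hcauchy' : UniformCauchySeqOn (F ∘ φ) atTop (closedBall z₀ r) := by
    rw [← closure_ball z₀ hr.ne']
    refine uniformCauchySeqOn_closure_of_frontier isBounded_ball
      (fun n => (hdiff n).diffContOnCl_ball subset_rfl) ?_
    rwa [frontier_ball z₀ hr.ne']
  obtain ⟨g, hg⟩ := hcauchy'.exists_tendstoUniformlyOn
  have hloc := (hg.mono ball_subset_closedBall).tendstoLocallyUniformlyOn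
  exact ⟨φ, hφ, Or.inl ⟨g, hloc.differentiableOn
    (.of_forall fun n => (hdiff n).mono ball_subset_closedBall) isOpen_ball, hloc⟩⟩

theorem julia_empty_or_perfect_of_genEscaping_empty_interior_general
    (D : Set ℂ) (hD : IsOpen D)
    (𝓕 : Set (ℂ → ℂ)) (hol : ∀ f ∈ 𝓕, DifferentiableOn ℂ f D)
    (hint : interior (GenEscapingSet D 𝓕) = ∅) :
    JuliaSet D 𝓕 = ∅ ∨
      (D ∩ closure (JuliaSet D 𝓕) ⊆ JuliaSet D 𝓕 ∧
        ∀ z₀ ∈ JuliaSet D 𝓕, ∀ N ∈ 𝓝 z₀,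
          ((N ∩ JuliaSet D 𝓕) \ {z₀}).Nonempty) := by
  refine Or.inr ⟨inter_closure_juliaSet_subset, fun z₀ hz₀ N hN => ?_⟩
  by_contra hisolated
  refine hz₀.2 ⟨hz₀.1, normalAt_of_eventually_nhdsNE hD hol hint hz₀.1 ?_⟩
  filter_upwards [self_mem_nhdsWithin,
    nhdsWithin_le_nhds (inter_mem hN (hD.mem_nhds hz₀.1))] with w hwz ⟨hwN, hwD⟩
  by_contra hwJ
  exact hisolated ⟨w, ⟨hwN, hwD, fun hwF => hwJ hwF.2⟩, hwz⟩

/-- If the generalized escaping like set `U(𝓕)` has empty interior, then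
the Julia like set `J(𝓕)` is either empty or a perfect set (closed in `D` with no isolated
points). -/
theorem julia_empty_or_perfect_of_genEscaping_empty_interior
    (D : Set ℂ) (hD : IsOpen D) (hDconn : IsConnected D)
    (𝓕 : Set (ℂ → ℂ)) (hol : ∀ f ∈ 𝓕, DifferentiableOn ℂ f D)
    (hint : interior (GenEscapingSet D 𝓕) = ∅) :
    JuliaSet D 𝓕 = ∅ ∨
      (D ∩ closure (JuliaSet D 𝓕) ⊆ JuliaSet D 𝓕 ∧
        ∀ z₀ ∈ JuliaSet D 𝓕, ∀ N ∈ 𝓝 z₀,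
          ((N ∩ JuliaSet D 𝓕) \ {z₀}).Nonempty) :=
  julia_empty_or_perfect_of_genEscaping_empty_interior_general D hD 𝓕 hol hint
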